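/- Let G be a (possibly infinite) group. Call a G-set S almost finite if every isotropy group of S has finite index in G and, for every positive integer n, the number of orbits G/H in S with [G : H] ≤ n is finite (equivalently: S^H is finite for every finite-index subgroup H ≤ G and S is the union of the S^H over all finite-index subgroups H). If S and T are almost finite G-sets with |S^H| = |T^H| for every subgroup H ≤ G of finite index, then S and T are isomorphic as G-sets. (This expresses the injectivity of the character map on the completed Burnside ring \widehat{A}(G) of almost finite G-sets.) -/

import Mathlib

namespace AlmostFiniteBurnside

open MulAction

noncomputable section
open scoped Classical

variable {G : Type*} [Group G] {S : Type*} [MulAction G S] {T : Type*} [MulAction G T]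

lemma mem_stab_smul_iff (g x : G) (s : S) :
    x ∈ stabilizer G (g • s) ↔ g⁻¹ * x * g ∈ stabilizer G s := by
  rw [mem_stabilizer_iff, mem_stabilizer_iff, mul_smul, mul_smul, inv_smul_eq_iff]

lemma stab_eq_of_stab_eq (g : G) {s : S} {t : T} (h : stabilizer G s = stabilizer G t) :
    stabilizer G (g • s) = stabilizer G (g • t) := by
  ext x; rw [mem_stab_smul_iff, mem_stab_smul_iff, h]

lemma mem_fixedPoints_iff_le {H : Subgroup G} {s : S} :
    s ∈ fixedPoints H S ↔ H ≤ stabilizer G s := by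
  simp [mem_fixedPoints, SetLike.le_def, mem_stabilizer_iff, Subgroup.smul_def, Subtype.forall]

lemma equiv_of_ncard {α β : Type*} [Finite α] [Finite β] (h : Nat.card α = Nat.card β) :
    Nonempty (α ≃ β) := by
  cases nonempty_fintype α; cases nonempty_fintype β
  exact ⟨Fintype.equivOfCardEq (by simpa [Nat.card_eq_fintype_card] using h)⟩

lemma finite_intermediate'' (H : Subgroup G) (hH : H.FiniteIndex) :
    {K : Subgroup G | H ≤ K}.Finite := by
  haveI : H.FiniteIndex := hH
  rw [← Set.finite_coe_iff]
  have key : ∀ K : Subgroup G, H ≤ K → ∀ x : G,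
      x ∈ K ↔ (QuotientGroup.mk x : G ⧸ H) ∈ QuotientGroup.mk '' (K : Set G) := by
    intro K hK x
    constructor
    · exact fun h => ⟨x, h, rfl⟩
    · rintro ⟨y, hy, hxy⟩
      have h1 : y⁻¹ * x ∈ H := QuotientGroup.eq.mp hxy
      have h2 := K.mul_mem hy (hK h1)
      simpa using h2
  apply Finite.of_injective
    (fun K : {K : Subgroup G | H ≤ K} => (QuotientGroup.mk '' (K.1 : Set G) : Set (G ⧸ H)))
  rintro ⟨K1, h1⟩ ⟨K2, h2⟩ hK
  simp only [Subtype.mk.injEq]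
  ext x
  rw [key K1 h1, key K2 h2]; exact (show (QuotientGroup.mk '' (K1 : Set G) : Set (G ⧸ H)) = QuotientGroup.mk '' (K2 : Set G) from hK) ▸ Iff.rfl


lemma mem_fixedPoints_iff_le' {H : Subgroup G} {s : S} :
    s ∈ fixedPoints H S ↔ H ≤ stabilizer G s := by
  simp [mem_fixedPoints, SetLike.le_def, mem_stabilizer_iff, Subgroup.smul_def, Subtype.forall]

noncomputable def fixDecomp (H : Subgroup G) :
    fixedPoints H S ≃
      ({x : S // stabilizer G x = H} ⊕
        (Σ K : {K : Subgroup G // H < K}, {x : S // stabilizer G x = K.1})) where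
  toFun x :=
    if h : stabilizer G (x : S) = H then Sum.inl ⟨x, h⟩
    else Sum.inr ⟨⟨stabilizer G (x : S),
      lt_of_le_of_ne (mem_fixedPoints_iff_le'.mp x.2) (Ne.symm h)⟩, ⟨x, rfl⟩⟩
  invFun y :=
    match y with
    | Sum.inl ⟨x, hx⟩ => ⟨x, mem_fixedPoints_iff_le'.mpr hx.ge⟩
    | Sum.inr ⟨K, ⟨x, hx⟩⟩ => ⟨x, mem_fixedPoints_iff_le'.mpr (hx ▸ K.2.le)⟩
  left_inv x := by
    dsimp only
    split_ifs <;> rfl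
  right_inv y := by
    rcases y with ⟨x, hx⟩ | ⟨K, xx⟩
    · simp only [hx, dif_pos]
    · obtain ⟨x, hx⟩ := xx
      obtain ⟨K, hK⟩ := K
      dsimp only at hx
      subst hx
      simp only [dif_neg hK.ne']

lemma stabEq_finite (hS2 : ∀ n : ℕ, {s : S | (stabilizer G s).index ≤ n}.Finite)
    (H : Subgroup G) : Finite {x : S // stabilizer G x = H} := by
  have : {x : S | stabilizer G x = H} ⊆ {x : S | (stabilizer G x).index ≤ H.index} := by
    intro x hx; simp only [Set.mem_setOf_eq] at hx ⊢; rw [hx]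
  exact ((hS2 H.index).subset this).to_subtype

lemma card_fix_eq (hS2 : ∀ n : ℕ, {s : S | (stabilizer G s).index ≤ n}.Finite)
    (H : Subgroup G) (hH : H.FiniteIndex) :
    Nat.card (fixedPoints H S) =
      Nat.card {x : S // stabilizer G x = H} +
      Nat.card (Σ K : {K : Subgroup G // H < K}, {x : S // stabilizer G x = K.1}) := by
  haveI := stabEq_finite hS2 H
  haveI : Finite {K : Subgroup G // H < K} := by
    have h1 := (finite_intermediate'' H hH).subset (fun K (hK : H < K) => hK.le)
    exact h1.to_subtype
  haveI : ∀ K : {K : Subgroup G // H < K}, Finite {x : S // stabilizer G x = K.1} :=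
    fun K => stabEq_finite hS2 K.1
  rw [Nat.card_congr (fixDecomp H), Nat.card_sum]

lemma step1
    (hS2 : ∀ n : ℕ, {s : S | (stabilizer G s).index ≤ n}.Finite)
    (hT2 : ∀ n : ℕ, {t : T | (stabilizer G t).index ≤ n}.Finite)
    (h : ∀ H : Subgroup G, H.FiniteIndex →
      Nat.card (fixedPoints H S) = Nat.card (fixedPoints H T)) :
    ∀ (n : ℕ) (H : Subgroup G), H.FiniteIndex → H.index ≤ n →
      Nat.card {x : S // stabilizer G x = H} = Nat.card {y : T // stabilizer G y = H} := by
  intro n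
  induction n with
  | zero =>
    intro H hH hle
    exact absurd (Nat.le_zero.mp hle) hH.index_ne_zero
  | succ n ih =>
    intro H hH hle
    have hfix := h H hH
    rw [card_fix_eq hS2 H hH, card_fix_eq hT2 H hH] at hfix
    have hsig : Nat.card (Σ K : {K : Subgroup G // H < K}, {x : S // stabilizer G x = K.1})
        = Nat.card (Σ K : {K : Subgroup G // H < K}, {y : T // stabilizer G y = K.1}) := by
      refine Nat.card_congr (Equiv.sigmaCongrRight fun K => ?_)
      have hrel : H.relIndex K.1 * K.1.index = H.index := Subgroup.relIndex_mul_index K.2.le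
      have hne : H.relIndex K.1 ≠ 1 := fun h1 => (K.2.not_ge (Subgroup.relIndex_eq_one.mp h1))
      have hr0 : H.relIndex K.1 ≠ 0 := by
        intro h0; rw [h0, zero_mul] at hrel; exact hH.index_ne_zero hrel.symm
      have hi0 : K.1.index ≠ 0 := by
        intro h0; rw [h0, mul_zero] at hrel; exact hH.index_ne_zero hrel.symm
      have h2 : 2 * K.1.index ≤ H.index := by
        calc 2 * K.1.index ≤ H.relIndex K.1 * K.1.index :=
              Nat.mul_le_mul_right _ (by omega)
          _ = H.index := hrel
      have hKfi : K.1.FiniteIndex := ⟨hi0⟩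
      have hKle : K.1.index ≤ n := by omega
      haveI := stabEq_finite hS2 K.1
      haveI := stabEq_finite hT2 K.1
      have : Nonempty ({x : S // stabilizer G x = K.1} ≃ {y : T // stabilizer G y = K.1}) := by
        cases nonempty_fintype {x : S // stabilizer G x = K.1}
        cases nonempty_fintype {y : T // stabilizer G y = K.1}
        exact ⟨Fintype.equivOfCardEq (by
          simpa [Nat.card_eq_fintype_card] using ih K.1 hKfi hKle)⟩
      exact Classical.choice this
    omega


def chooseG {s x : S} (hx : x ∈ orbit G s) : G := Classical.choose (mem_orbit_iff.mp hx)

lemma chooseG_spec {s x : S} (hx : x ∈ orbit G s) : chooseG hx • s = x :=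
  Classical.choose_spec (mem_orbit_iff.mp hx)

def omap (s : S) (t : T) : orbit G s → orbit G t :=
  fun x => ⟨chooseG x.2 • t, mem_orbit t _⟩

lemma omap_coe {s : S} {t : T} (hst : stabilizer G s = stabilizer G t)
    {x : orbit G s} {g : G} (hg : g • s = ↑x) : (omap s t x : T) = g • t := by
  have h1 : chooseG x.2 • s = ↑x := chooseG_spec x.2
  have h2 : g⁻¹ * chooseG x.2 ∈ stabilizer G s := by
    rw [mem_stabilizer_iff, mul_smul, h1, ← hg, inv_smul_smul]
  rw [hst, mem_stabilizer_iff] at h2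
  show chooseG x.2 • t = g • t
  conv_lhs => rw [show chooseG x.2 = g * (g⁻¹ * chooseG x.2) by group]
  rw [mul_smul, h2]

lemma omap_omap {s : S} {t : T} (hst : stabilizer G s = stabilizer G t) (x : orbit G s) :
    omap t s (omap s t x) = x := by
  have h1 : (omap s t x : T) = chooseG x.2 • t := omap_coe hst (chooseG_spec x.2)
  have h2 : (omap t s (omap s t x) : S) = chooseG x.2 • s :=
    omap_coe hst.symm h1.symm
  ext
  rw [h2, chooseG_spec x.2]

def oEquiv {s : S} {t : T} (hst : stabilizer G s = stabilizer G t) :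
    orbit G s ≃ orbit G t :=
  ⟨omap s t, omap t s, omap_omap hst, omap_omap hst.symm⟩

lemma omap_stab {s : S} {t : T} (hst : stabilizer G s = stabilizer G t) (x : orbit G s) :
    stabilizer G (omap s t x : T) = stabilizer G (x : S) := by
  have h1 : (omap s t x : T) = chooseG x.2 • t := omap_coe hst (chooseG_spec x.2)
  rw [h1, ← stab_eq_of_stab_eq (chooseG x.2) hst, chooseG_spec x.2]

lemma mk_smul_eq (g : G) (x : S) :
    Quotient.mk (orbitRel G S) (g • x) = Quotient.mk (orbitRel G S) x :=
  Quotient.sound (mem_orbit x g)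

lemma exists_smul_of_mk_eq {x y : S}
    (h : Quotient.mk (orbitRel G S) x = Quotient.mk (orbitRel G S) y) :
    ∃ g : G, g • y = x := by
  have h2 : x ∈ orbit G y := Quotient.exact h
  exact mem_orbit_iff.mp h2

def orbClasses (S : Type*) [MulAction G S] (H : Subgroup G) : Set (Quotient (orbitRel G S)) :=
  {ω | ∃ x : S, Quotient.mk (orbitRel G S) x = ω ∧ stabilizer G x = H}

lemma count_orbits {U : Type*} [MulAction G U] (H : Subgroup G) (u₀ : U)
    (hu₀ : stabilizer G u₀ = H) :
    Nat.card {x : S // stabilizer G x = H} =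
      Nat.card (orbClasses S H) *
        Nat.card {z : orbit G u₀ // stabilizer G (z : U) = H} := by
  set A := {x : S // stabilizer G x = H} with hA
  set f : A → orbClasses S H :=
    (fun x => ⟨Quotient.mk (orbitRel G S) x.1, ⟨x.1, rfl, x.2⟩⟩) with hf
  have key : ∀ ω : orbClasses S H,
      Nonempty ({a : A // f a = ω} ≃ {z : orbit G u₀ // stabilizer G (z : U) = H}) := by
    intro ω
    obtain ⟨x₀, hx₀, hsx₀⟩ := ω.2
    have hst : stabilizer G x₀ = stabilizer G u₀ := hsx₀.trans hu₀.symm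
    have ea : {a : A // f a = ω} ≃ {z : orbit G x₀ // stabilizer G (z : S) = H} := by
      refine ⟨fun a => ⟨⟨a.1.1, ?_⟩, a.1.2⟩, fun z => ⟨⟨z.1.1, z.2⟩, ?_⟩, fun a => rfl,
        fun z => rfl⟩
      · have h1 : Quotient.mk (orbitRel G S) a.1.1 = ω.1 := congrArg Subtype.val a.2
        exact Quotient.exact (h1.trans hx₀.symm)
      · refine Subtype.ext ?_
        show Quotient.mk (orbitRel G S) z.1.1 = ω.1
        obtain ⟨g, hg⟩ := mem_orbit_iff.mp z.1.2
        rw [← hg, mk_smul_eq, hx₀]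
    have eb : {z : orbit G x₀ // stabilizer G (z : S) = H} ≃
        {z : orbit G u₀ // stabilizer G (z : U) = H} := by
      refine Equiv.subtypeEquiv (oEquiv hst) (fun z => ?_)
      have h1 : stabilizer G ((omap x₀ u₀ z : U)) = stabilizer G (z : S) := omap_stab hst z
      exact ⟨fun hz => h1.trans hz, fun hz => h1.symm.trans hz⟩
    exact ⟨ea.trans eb⟩
  have E : A ≃ (orbClasses S H) × {z : orbit G u₀ // stabilizer G (z : U) = H} :=
    ((Equiv.sigmaFiberEquiv f).symm.trans
      (Equiv.sigmaCongrRight (fun ω => Classical.choice (key ω)))).trans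
      (Equiv.sigmaEquivProd _ _)
  rw [Nat.card_congr E, Nat.card_prod]

lemma step2
    (hS2 : ∀ n : ℕ, {s : S | (stabilizer G s).index ≤ n}.Finite)
    (hT2 : ∀ n : ℕ, {t : T | (stabilizer G t).index ≤ n}.Finite)
    (H : Subgroup G)
    (hcard : Nat.card {x : S // stabilizer G x = H} = Nat.card {y : T // stabilizer G y = H}) :
    Nat.card (orbClasses S H) = Nat.card (orbClasses T H) := by
  haveI fS := stabEq_finite hS2 H
  haveI fT := stabEq_finite hT2 H
  by_cases hne : Nonempty {x : S // stabilizer G x = H}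
  · obtain ⟨⟨s₀, hs₀⟩⟩ := hne
    have c1 := count_orbits (S := S) H s₀ hs₀
    have c2 := count_orbits (S := T) H s₀ hs₀
    rw [hcard] at c1
    haveI : Finite {z : orbit G s₀ // stabilizer G (z : S) = H} := by
      have : Function.Injective
          (fun z : {z : orbit G s₀ // stabilizer G (z : S) = H} =>
            (⟨z.1.1, z.2⟩ : {x : S // stabilizer G x = H})) := by
        intro a b hab
        dsimp only at hab
        rw [Subtype.mk.injEq] at hab
        exact Subtype.ext (Subtype.ext hab)
      exact Finite.of_injective _ this
    haveI : Nonempty {z : orbit G s₀ // stabilizer G (z : S) = H} :=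
      ⟨⟨⟨s₀, mem_orbit_self s₀⟩, hs₀⟩⟩
    have hpos : 0 < Nat.card {z : orbit G s₀ // stabilizer G (z : S) = H} := Nat.card_pos
    exact Nat.eq_of_mul_eq_mul_right hpos (c1.symm.trans c2)
  · have hS0 : IsEmpty {x : S // stabilizer G x = H} := not_nonempty_iff.mp hne
    have hT0 : IsEmpty {y : T // stabilizer G y = H} := by
      by_contra hc
      rw [not_isEmpty_iff] at hc
      have : 0 < Nat.card {y : T // stabilizer G y = H} := Nat.card_pos
      rw [← hcard, Nat.card_of_isEmpty] at this
      omega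
    have e1 : IsEmpty (orbClasses S H) := by
      constructor; rintro ⟨ω, x, -, hx⟩; exact hS0.false ⟨x, hx⟩
    have e2 : IsEmpty (orbClasses T H) := by
      constructor; rintro ⟨ω, y, -, hy⟩; exact hT0.false ⟨y, hy⟩
    rw [Nat.card_of_isEmpty, Nat.card_of_isEmpty]

def conjRel (G : Type*) [Group G] : Setoid (Subgroup G) where
  r H K := ∃ g : G, ∀ x : G, x ∈ H ↔ g * x * g⁻¹ ∈ K
  iseqv := by
    refine ⟨fun H => ⟨1, fun x => by simp⟩, ?_, ?_⟩
    · rintro H K ⟨g, hg⟩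
      refine ⟨g⁻¹, fun x => ?_⟩
      have h1 := hg (g⁻¹ * x * g)
      rw [show g * (g⁻¹ * x * g) * g⁻¹ = x by group] at h1
      rw [inv_inv]
      exact h1.symm
    · rintro H K L ⟨g, hg⟩ ⟨k, hk⟩
      refine ⟨k * g, fun x => ?_⟩
      rw [hg x, hk (g * x * g⁻¹), show k * (g * x * g⁻¹) * k⁻¹ = (k * g) * x * (k * g)⁻¹ by group]

def clMap (S : Type*) [MulAction G S] : Quotient (orbitRel G S) → Quotient (conjRel G) :=
  fun ω => Quotient.mk (conjRel G) (stabilizer G (Quotient.out ω))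

lemma clMap_mk (x : S) :
    clMap S (Quotient.mk (orbitRel G S) x) = Quotient.mk (conjRel G) (stabilizer G x) := by
  obtain ⟨g, hg⟩ : ∃ g : G, g • x = Quotient.out (Quotient.mk (orbitRel G S) x) :=
    exists_smul_of_mk_eq (Quotient.out_eq _)
  show Quotient.mk (conjRel G) (stabilizer G (Quotient.out (Quotient.mk (orbitRel G S) x))) = _
  rw [← hg]
  refine Quotient.sound ⟨g⁻¹, fun z => ?_⟩
  rw [inv_inv]
  exact mem_stab_smul_iff g z x

lemma clMap_eq_iff (ω : Quotient (orbitRel G S)) (H : Subgroup G) :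
    clMap S ω = Quotient.mk (conjRel G) H ↔ ω ∈ orbClasses S H := by
  constructor
  · intro hω
    obtain ⟨g, hg⟩ : ∃ g : G, ∀ x : G, x ∈ stabilizer G (Quotient.out ω) ↔ g * x * g⁻¹ ∈ H :=
      Quotient.exact hω
    refine ⟨g • Quotient.out ω, by rw [mk_smul_eq, Quotient.out_eq], ?_⟩
    ext z
    rw [mem_stab_smul_iff, hg (g⁻¹ * z * g), show g * (g⁻¹ * z * g) * g⁻¹ = z by group]
  · rintro ⟨x, hx, hsx⟩
    rw [← hx, clMap_mk, hsx]

section Assemble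

variable (tf : Quotient (orbitRel G S) → T)

def Fmap : S → T := fun s =>
  Classical.choose
      (exists_smul_of_mk_eq (Quotient.out_eq (Quotient.mk (orbitRel G S) s)).symm) •
    tf (Quotient.mk (orbitRel G S) s)

variable (ht2 : ∀ ω, stabilizer G (tf ω) = stabilizer G (Quotient.out ω))

include ht2 in
lemma Fmap_spec (ω : Quotient (orbitRel G S)) (s : S)
    (hs : Quotient.mk (orbitRel G S) s = ω) (g : G) (hg : g • Quotient.out ω = s) :
    Fmap tf s = g • tf ω := by
  subst hs
  have hc : Classical.choose
      (exists_smul_of_mk_eq (Quotient.out_eq (Quotient.mk (orbitRel G S) s)).symm) •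
        Quotient.out (Quotient.mk (orbitRel G S) s) = s :=
    Classical.choose_spec
      (exists_smul_of_mk_eq (Quotient.out_eq (Quotient.mk (orbitRel G S) s)).symm)
  set c := Classical.choose
      (exists_smul_of_mk_eq (Quotient.out_eq (Quotient.mk (orbitRel G S) s)).symm) with hcdef
  have h1 : g⁻¹ * c ∈ stabilizer G (Quotient.out (Quotient.mk (orbitRel G S) s)) := by
    rw [mem_stabilizer_iff, mul_smul, hc]
    exact inv_smul_eq_iff.mpr hg.symm
  rw [← ht2, mem_stabilizer_iff] at h1
  show c • tf (Quotient.mk (orbitRel G S) s) = g • tf (Quotient.mk (orbitRel G S) s)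
  conv_lhs => rw [show c = g * (g⁻¹ * c) by group]
  rw [mul_smul, h1]

include ht2 in
lemma Fmap_equivariant (g : G) (s : S) : Fmap tf (g • s) = g • Fmap tf s := by
  obtain ⟨g₂, hg₂⟩ : ∃ g₂ : G, g₂ • Quotient.out (Quotient.mk (orbitRel G S) s) = s :=
    exists_smul_of_mk_eq (Quotient.out_eq _).symm
  have h1 : Fmap tf (g • s) = (g * g₂) • tf (Quotient.mk (orbitRel G S) s) :=
    Fmap_spec tf ht2 _ _ (mk_smul_eq g s) _ (by rw [mul_smul, hg₂])
  have h2 : Fmap tf s = g₂ • tf (Quotient.mk (orbitRel G S) s) :=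
    Fmap_spec tf ht2 _ _ rfl _ hg₂
  rw [h1, h2, mul_smul]

variable (e0 : Quotient (orbitRel G S) ≃ Quotient (orbitRel G T))
  (ht1 : ∀ ω, Quotient.mk (orbitRel G T) (tf ω) = e0 ω)

include ht1 ht2 in
lemma Fmap_mk (s : S) :
    Quotient.mk (orbitRel G T) (Fmap tf s) = e0 (Quotient.mk (orbitRel G S) s) := by
  obtain ⟨g₂, hg₂⟩ : ∃ g₂ : G, g₂ • Quotient.out (Quotient.mk (orbitRel G S) s) = s :=
    exists_smul_of_mk_eq (Quotient.out_eq _).symm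
  rw [Fmap_spec tf ht2 _ _ rfl _ hg₂, mk_smul_eq, ht1]

include ht1 ht2 in
lemma Fmap_bijective : Function.Bijective (Fmap tf) := by
  constructor
  · intro s s' hss
    have hω : Quotient.mk (orbitRel G S) s = Quotient.mk (orbitRel G S) s' := by
      have := congrArg (Quotient.mk (orbitRel G T)) hss
      rw [Fmap_mk tf ht2 e0 ht1, Fmap_mk tf ht2 e0 ht1] at this
      exact e0.injective this
    obtain ⟨g₂, hg₂⟩ : ∃ g₂ : G, g₂ • Quotient.out (Quotient.mk (orbitRel G S) s) = s :=
      exists_smul_of_mk_eq (Quotient.out_eq _).symm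
    obtain ⟨g₃, hg₃⟩ : ∃ g₃ : G, g₃ • Quotient.out (Quotient.mk (orbitRel G S) s) = s' := by
      rw [hω]; exact exists_smul_of_mk_eq (Quotient.out_eq _).symm
    have h2 : Fmap tf s = g₂ • tf (Quotient.mk (orbitRel G S) s) :=
      Fmap_spec tf ht2 _ _ rfl _ hg₂
    have h3 : Fmap tf s' = g₃ • tf (Quotient.mk (orbitRel G S) s) :=
      Fmap_spec tf ht2 _ _ hω.symm _ hg₃
    rw [h2, h3] at hss
    have h4 : g₃⁻¹ * g₂ ∈ stabilizer G (tf (Quotient.mk (orbitRel G S) s)) := by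
      rw [mem_stabilizer_iff, mul_smul, hss, inv_smul_smul]
    rw [ht2, mem_stabilizer_iff] at h4
    rw [← hg₂, ← hg₃]
    conv_lhs => rw [show g₂ = g₃ * (g₃⁻¹ * g₂) by group]
    rw [mul_smul, h4]
  · intro t
    set ω := e0.symm (Quotient.mk (orbitRel G T) t) with hωdef
    have h1 : Quotient.mk (orbitRel G T) (tf ω) = Quotient.mk (orbitRel G T) t := by
      rw [ht1, hωdef, Equiv.apply_symm_apply]
    obtain ⟨g, hg⟩ : ∃ g : G, g • tf ω = t := exists_smul_of_mk_eq h1.symm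
    refine ⟨g • Quotient.out ω, ?_⟩
    have hmk : Quotient.mk (orbitRel G S) (g • Quotient.out ω) = ω := by
      rw [mk_smul_eq, Quotient.out_eq]
    rw [Fmap_spec tf ht2 ω _ hmk g rfl, hg]

end Assemble

theorem main
    (hS1 : ∀ s : S, (stabilizer G s).FiniteIndex)
    (hS2 : ∀ n : ℕ, {s : S | (stabilizer G s).index ≤ n}.Finite)
    (hT1 : ∀ t : T, (stabilizer G t).FiniteIndex)
    (hT2 : ∀ n : ℕ, {t : T | (stabilizer G t).index ≤ n}.Finite)
    (h : ∀ H : Subgroup G, H.FiniteIndex →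
      Nat.card (fixedPoints H S) = Nat.card (fixedPoints H T)) :
    ∃ e : S ≃ T, ∀ (g : G) (s : S), e (g • s) = g • e s := by
  have hA : ∀ H : Subgroup G, H.FiniteIndex →
      Nat.card {x : S // stabilizer G x = H} = Nat.card {y : T // stabilizer G y = H} :=
    fun H hH => step1 hS2 hT2 h H.index H hH le_rfl
  have hOm : ∀ H : Subgroup G, H.FiniteIndex →
      Nat.card (orbClasses S H) = Nat.card (orbClasses T H) :=
    fun H hH => step2 hS2 hT2 H (hA H hH)
  have fibEq : ∀ q : Quotient (conjRel G),
      Nonempty ({ω : Quotient (orbitRel G S) // clMap S ω = q} ≃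
        {ω : Quotient (orbitRel G T) // clMap T ω = q}) := by
    intro q
    by_cases hq : (∃ ω : Quotient (orbitRel G S), clMap S ω = q) ∨
        ∃ ω : Quotient (orbitRel G T), clMap T ω = q
    · have hexH : ∃ H : Subgroup G, H.FiniteIndex ∧ q = Quotient.mk (conjRel G) H := by
        rcases hq with ⟨ω, hω⟩ | ⟨ω, hω⟩
        · exact ⟨_, hS1 (Quotient.out ω), hω.symm⟩
        · exact ⟨_, hT1 (Quotient.out ω), hω.symm⟩
      obtain ⟨H, hH, rfl⟩ := hexH
      have e1 : {ω : Quotient (orbitRel G S) // clMap S ω = Quotient.mk (conjRel G) H} ≃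
          orbClasses S H := Equiv.subtypeEquivRight fun ω => clMap_eq_iff ω H
      have e2 : {ω : Quotient (orbitRel G T) // clMap T ω = Quotient.mk (conjRel G) H} ≃
          orbClasses T H := Equiv.subtypeEquivRight fun ω => clMap_eq_iff ω H
      haveI : Finite (orbClasses S H) := by
        haveI := stabEq_finite hS2 H
        apply Finite.of_surjective
          (fun x : {x : S // stabilizer G x = H} =>
            (⟨Quotient.mk (orbitRel G S) x.1, ⟨x.1, rfl, x.2⟩⟩ : orbClasses S H))
        rintro ⟨ω, x, hx, hsx⟩
        exact ⟨⟨x, hsx⟩, Subtype.ext hx⟩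
      haveI : Finite (orbClasses T H) := by
        haveI := stabEq_finite hT2 H
        apply Finite.of_surjective
          (fun x : {x : T // stabilizer G x = H} =>
            (⟨Quotient.mk (orbitRel G T) x.1, ⟨x.1, rfl, x.2⟩⟩ : orbClasses T H))
        rintro ⟨ω, x, hx, hsx⟩
        exact ⟨⟨x, hsx⟩, Subtype.ext hx⟩
      haveI : Finite {ω : Quotient (orbitRel G S) // clMap S ω = Quotient.mk (conjRel G) H} :=
        Finite.of_equiv _ e1.symm
      haveI : Finite {ω : Quotient (orbitRel G T) // clMap T ω = Quotient.mk (conjRel G) H} :=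
        Finite.of_equiv _ e2.symm
      refine equiv_of_ncard ?_
      rw [Nat.card_congr e1, Nat.card_congr e2]
      exact hOm H hH
    · push_neg at hq
      obtain ⟨h1, h2⟩ := hq
      haveI : IsEmpty {ω : Quotient (orbitRel G S) // clMap S ω = q} := ⟨fun ω => h1 ω.1 ω.2⟩
      haveI : IsEmpty {ω : Quotient (orbitRel G T) // clMap T ω = q} := ⟨fun ω => h2 ω.1 ω.2⟩
      exact ⟨Equiv.equivOfIsEmpty _ _⟩
  set e0 : Quotient (orbitRel G S) ≃ Quotient (orbitRel G T) :=
    Equiv.ofFiberEquiv (fun q => Classical.choice (fibEq q)) with he0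
  have hcl : ∀ ω, clMap T (e0 ω) = clMap S ω := fun ω => Equiv.ofFiberEquiv_map _ ω
  have tchoice : ∀ ω : Quotient (orbitRel G S), ∃ t : T,
      Quotient.mk (orbitRel G T) t = e0 ω ∧
        stabilizer G t = stabilizer G (Quotient.out ω) :=
    fun ω => (clMap_eq_iff (e0 ω) (stabilizer G (Quotient.out ω))).mp (hcl ω)
  choose tf ht1 ht2 using tchoice
  exact ⟨Equiv.ofBijective (Fmap tf) (Fmap_bijective tf ht2 e0 ht1),
    fun g s => Fmap_equivariant tf ht2 g s⟩

end
end AlmostFiniteBurnside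

/-- **Injectivity of the character map on the completed Burnside ring
`\widehat{A}(G)`.**  Call a `G`-set `S` *almost finite* if every stabilizer has
finite index and, for every `n`, the set of points whose orbit has at most `n`
elements (equivalently, whose stabilizer has index `≤ n`) is finite — so that
`S` has only finitely many orbits `G/H` with `[G : H] ≤ n` for each `n`.  If
two almost finite `G`-sets have the same (finite) number of `H`-fixed points
for every finite-index subgroup `H ≤ G`, they are isomorphic as `G`-sets. -/
theorem almost_finite_character_injective
    (G : Type*) [Group G] (S T : Type*) [MulAction G S] [MulAction G T]
    (hS1 : ∀ s : S, (MulAction.stabilizer G s).FiniteIndex)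
    (hS2 : ∀ n : ℕ, {s : S | (MulAction.stabilizer G s).index ≤ n}.Finite)
    (hT1 : ∀ t : T, (MulAction.stabilizer G t).FiniteIndex)
    (hT2 : ∀ n : ℕ, {t : T | (MulAction.stabilizer G t).index ≤ n}.Finite)
    (h : ∀ H : Subgroup G, H.FiniteIndex →
      Nat.card (MulAction.fixedPoints H S) = Nat.card (MulAction.fixedPoints H T)) :
    ∃ e : S ≃ T, ∀ (g : G) (s : S), e (g • s) = g • e s :=
  AlmostFiniteBurnside.main hS1 hS2 hT1 hT2 h
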